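/- Let G and H be graphs with odd Hadwiger numbers oh(G) = s ≥ 2 and oh(H) = t ≥ 2. Then the odd Hadwiger number of the strong product satisfies oh(G ⊠ H) ≥ oh(K_s ⊠ K_t), and the odd Hadwiger number of the lexicographic product satisfies oh(G ∘ H) ≥ oh(K_s ∘ K_t). -/

import Mathlib

open SimpleGraph

/-- `H` is an odd minor of `G`: there are pairwise vertex-disjoint subtrees of `G`, one for
each vertex of `H`, and a 2-colouring of the vertices which is proper on each tree, such that
for every edge of `H` there is a monochromatic edge of `G` between the corresponding trees. -/
def IsOddMinorOf {W V : Type*} (H : SimpleGraph W) (G : SimpleGraph V) : Prop :=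
  ∃ (T : W → G.Subgraph) (c : V → Fin 2),
    (∀ w, (T w).coe.IsTree) ∧
    (Pairwise fun w w' => Disjoint (T w).verts (T w').verts) ∧
    (∀ w, ∀ x y, (T w).Adj x y → c x ≠ c y) ∧
    (∀ w w', H.Adj w w' →
      ∃ x y, x ∈ (T w).verts ∧ y ∈ (T w').verts ∧ G.Adj x y ∧ c x = c y)

/-- The odd Hadwiger number of `G`: the largest `r` such that `K_r` is an odd minor of `G`. -/
noncomputable def oddHadwiger {V : Type*} [Fintype V] (G : SimpleGraph V) : ℕ :=
  sSup {r : ℕ | IsOddMinorOf (⊤ : SimpleGraph (Fin r)) G}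

/-- The Cartesian product `G □ H`. -/
def cartProd {α β : Type*} (G : SimpleGraph α) (H : SimpleGraph β) : SimpleGraph (α × β) where
  Adj x y := (x.1 = y.1 ∧ H.Adj x.2 y.2) ∨ (x.2 = y.2 ∧ G.Adj x.1 y.1)
  symm := by
    constructor
    rintro x y (⟨h1, h2⟩ | ⟨h1, h2⟩)
    · exact Or.inl ⟨h1.symm, h2.symm⟩
    · exact Or.inr ⟨h1.symm, h2.symm⟩
  loopless := by
    constructor
    rintro x (⟨_, h⟩ | ⟨_, h⟩)
    · exact H.irrefl h
    · exact G.irrefl h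

/-- The strong product `G ⊠ H`. -/
def strongProd {α β : Type*} (G : SimpleGraph α) (H : SimpleGraph β) : SimpleGraph (α × β) where
  Adj x y := (x.1 = y.1 ∧ H.Adj x.2 y.2) ∨ (x.2 = y.2 ∧ G.Adj x.1 y.1) ∨
    (G.Adj x.1 y.1 ∧ H.Adj x.2 y.2)
  symm := by
    constructor
    rintro x y (⟨h1, h2⟩ | ⟨h1, h2⟩ | ⟨h1, h2⟩)
    · exact Or.inl ⟨h1.symm, h2.symm⟩
    · exact Or.inr (Or.inl ⟨h1.symm, h2.symm⟩)
    · exact Or.inr (Or.inr ⟨h1.symm, h2.symm⟩)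
  loopless := by
    constructor
    rintro x (⟨_, h⟩ | ⟨_, h⟩ | ⟨h, _⟩)
    · exact H.irrefl h
    · exact G.irrefl h
    · exact G.irrefl h

/-- The lexicographic product `G ∘ H`. -/
def lexProd {α β : Type*} (G : SimpleGraph α) (H : SimpleGraph β) : SimpleGraph (α × β) where
  Adj x y := G.Adj x.1 y.1 ∨ (x.1 = y.1 ∧ H.Adj x.2 y.2)
  symm := by
    constructor
    rintro x y (h | ⟨h1, h2⟩)
    · exact Or.inl h.symm
    · exact Or.inr ⟨h1.symm, h2.symm⟩
  loopless := by
    constructor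
    rintro x (h | ⟨_, h⟩)
    · exact G.irrefl h
    · exact H.irrefl h

/-- The direct (tensor) product `G × H`. -/
def dirProd {α β : Type*} (G : SimpleGraph α) (H : SimpleGraph β) : SimpleGraph (α × β) where
  Adj x y := G.Adj x.1 y.1 ∧ H.Adj x.2 y.2
  symm := by
    constructor
    rintro x y ⟨h1, h2⟩
    exact ⟨h1.symm, h2.symm⟩
  loopless := by
    constructor
    rintro x ⟨h, _⟩
    exact G.irrefl h


/-!
Take odd `K_s`- and `K_t`-models `(T_i, c)` in `G` and `(S_j, d)` in `H`, and fix a root `r_j ∈ S_j`.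
For each pair `(i, j)` the comb `T_i × S_j`, made of a copy of `S_j` above every vertex of `T_i`
and a copy of `T_i` along the row `r_j`, is a tree of `G ⊠ H`, properly coloured by
`c x + d y (mod 2)`. Two such combs meet in a monochromatic edge whenever `(i, j)` and `(i', j')` are
adjacent in `K_s ⊠ K_t`: vertical, horizontal or diagonal, according as `i = i'`, `j = j'` or neither.
So `K_s ⊠ K_t = K_{st}` is an odd minor of `G ⊠ H`, and hence of `G ∘ H ⊇ G ⊠ H`, while the odd
Hadwiger number of a graph on `st` vertices is at most `st`.
-/

namespace SimpleGraph

section Bridge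

variable {V V' : Type*} {G : SimpleGraph V} {G' : SimpleGraph V'}

lemma Reachable.map_of_forall_adj (f : V → V')
    (hf : ∀ x y, G.Adj x y → f x = f y ∨ G'.Adj (f x) (f y)) {u v : V} (h : G.Reachable u v) :
    G'.Reachable (f u) (f v) := by
  obtain ⟨w⟩ := h
  induction w with
  | nil => rfl
  | cons hadj _ ih =>
    rcases hf _ _ hadj with heq | hadj'
    · exact heq ▸ ih
    · exact hadj'.reachable.trans ih

lemma IsBridge.of_map {u v : V} (f : V → V') (hbridge : G'.IsBridge s(f u, f v))
    (hf : ∀ x y, (G.deleteEdges {s(u, v)}).Adj x y →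
      f x = f y ∨ (G'.deleteEdges {s(f u, f v)}).Adj (f x) (f y)) :
    G.IsBridge s(u, v) :=
  fun h => hbridge (h.map_of_forall_adj f hf)

end Bridge

section Comb

variable {α β : Type*} (A : SimpleGraph α) (B : SimpleGraph β) (r : β)

def comb : SimpleGraph (α × β) where
  Adj p q := (p.1 = q.1 ∧ B.Adj p.2 q.2) ∨ (p.2 = r ∧ q.2 = r ∧ A.Adj p.1 q.1)
  symm := ⟨by
    rintro p q (⟨h1, h2⟩ | ⟨h1, h2, h3⟩)
    exacts [Or.inl ⟨h1.symm, h2.symm⟩, Or.inr ⟨h2, h1, h3.symm⟩]⟩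
  loopless := ⟨by
    rintro p (⟨_, h⟩ | ⟨_, _, h⟩)
    exacts [B.irrefl h, A.irrefl h]⟩

variable {A B r}

lemma comb_connected (hA : A.Connected) (hB : B.Connected) : (comb A B r).Connected := by
  have := hA.nonempty
  have := hB.nonempty
  let column (a : α) : B →g comb A B r := ⟨fun b => (a, b), fun h => Or.inl ⟨rfl, h⟩⟩
  let row : A →g comb A B r := ⟨fun a => (a, r), fun h => Or.inr ⟨rfl, rfl, h⟩⟩
  refine (connected_iff _).2 ⟨fun ⟨a, b⟩ ⟨a', b'⟩ => ?_, inferInstance⟩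
  exact (((hB.preconnected b r).map (column a)).trans ((hA.preconnected a a').map row)).trans
    ((hB.preconnected r b').map (column a'))

lemma comb_isAcyclic (hA : A.IsAcyclic) (hB : B.IsAcyclic) : (comb A B r).IsAcyclic := by
  classical
  rw [isAcyclic_iff_forall_adj_isBridge] at hA hB ⊢
  rintro ⟨a, b⟩ ⟨a', b'⟩ (⟨rfl, hbb⟩ | ⟨hb, hb', haa⟩)
  · -- project onto the column `a`, collapsing every other column to its root
    refine IsBridge.of_map (fun p => if p.1 = a then p.2 else r) (by simpa using hB hbb) ?_
    rintro ⟨x, y⟩ ⟨x', y'⟩ hxy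
    rw [deleteEdges_adj, Set.mem_singleton_iff] at hxy
    obtain ⟨⟨rfl, hyy⟩ | ⟨rfl, rfl, -⟩, hne⟩ := hxy
    · by_cases hxa : x = a
      · subst hxa
        refine Or.inr ?_
        simp only [if_true, deleteEdges_adj, Set.mem_singleton_iff]
        exact ⟨hyy, fun h => hne (by simpa using congrArg (Sym2.map (Prod.mk x)) h)⟩
      · simp [hxa]
    · simp
  · refine IsBridge.of_map Prod.fst (hA haa) ?_
    rintro ⟨x, y⟩ ⟨x', y'⟩ hxy
    rw [deleteEdges_adj, Set.mem_singleton_iff] at hxy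
    obtain ⟨⟨hx, -⟩ | ⟨hy, hy', hxx⟩, hne⟩ := hxy
    · exact Or.inl hx
    · refine Or.inr ((deleteEdges_adj ..).2 ⟨hxx, fun h => hne ?_⟩)
      simp only at hb hb' hy hy'
      simpa [hb, hb', hy, hy'] using congrArg (Sym2.map (·, r)) h

lemma comb_isTree (hA : A.IsTree) (hB : B.IsTree) : (comb A B r).IsTree :=
  ⟨comb_connected hA.connected hB.connected, comb_isAcyclic hA.isAcyclic hB.isAcyclic⟩

end Comb

def Subgraph.ofLE {V : Type*} {G G' : SimpleGraph V} (hle : G ≤ G') (T : G.Subgraph) :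
    G'.Subgraph where
  verts := T.verts
  Adj := T.Adj
  adj_sub h := hle (T.adj_sub h)
  edge_vert := T.edge_vert
  symm := T.symm

end SimpleGraph

section CombSubgraph

variable {V W : Type*} {G : SimpleGraph V} {H : SimpleGraph W}

def combSubgraph (T : G.Subgraph) (S : H.Subgraph) (r : W) (hr : r ∈ S.verts) :
    (strongProd G H).Subgraph where
  verts := T.verts ×ˢ S.verts
  Adj p q := (p.1 = q.1 ∧ p.1 ∈ T.verts ∧ S.Adj p.2 q.2) ∨ (p.2 = r ∧ q.2 = r ∧ T.Adj p.1 q.1)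
  adj_sub := by
    rintro p q (⟨h1, -, h3⟩ | ⟨h1, h2, h3⟩)
    · exact Or.inl ⟨h1, S.adj_sub h3⟩
    · exact Or.inr (Or.inl ⟨h1.trans h2.symm, T.adj_sub h3⟩)
  edge_vert := by
    rintro p q (⟨-, h2, h3⟩ | ⟨h1, -, h3⟩)
    · exact ⟨h2, S.edge_vert h3⟩
    · exact ⟨T.edge_vert h3, h1 ▸ hr⟩
  symm := ⟨by
    rintro p q (⟨h1, h2, h3⟩ | ⟨h1, h2, h3⟩)
    · exact Or.inl ⟨h1.symm, h1 ▸ h2, h3.symm⟩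
    · exact Or.inr ⟨h2, h1, h3.symm⟩⟩

def combSubgraphIso (T : G.Subgraph) (S : H.Subgraph) (r : W) (hr : r ∈ S.verts) :
    (combSubgraph T S r hr).coe ≃g comb T.coe S.coe ⟨r, hr⟩ where
  toEquiv := Equiv.Set.prod T.verts S.verts
  map_rel_iff' := by
    rintro ⟨⟨x, y⟩, hx, hy⟩ ⟨⟨x', y'⟩, hx', hy'⟩
    change (comb T.coe S.coe ⟨r, hr⟩).Adj (⟨x, hx⟩, ⟨y, hy⟩) (⟨x', hx'⟩, ⟨y', hy'⟩) ↔
      (x = x' ∧ x ∈ T.verts ∧ S.Adj y y') ∨ (y = r ∧ y' = r ∧ T.Adj x x')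
    simp only [comb, Subgraph.coe_adj, Subtype.mk.injEq]
    exact or_congr ⟨fun h => ⟨h.1, hx, h.2⟩, fun h => ⟨h.1, h.2.2⟩⟩ Iff.rfl

lemma isTree_coe_combSubgraph {T : G.Subgraph} {S : H.Subgraph} {r : W} (hr : r ∈ S.verts)
    (hT : T.coe.IsTree) (hS : S.coe.IsTree) : (combSubgraph T S r hr).coe.IsTree :=
  (combSubgraphIso T S r hr).isTree_iff.2 (comb_isTree hT hS)

end CombSubgraph

section OddMinor

variable {X Y V W : Type*} {K : SimpleGraph X} {L : SimpleGraph Y}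
  {G : SimpleGraph V} {H : SimpleGraph W}

lemma isOddMinorOf_of_isEmpty [IsEmpty X] (K : SimpleGraph X) (G : SimpleGraph V) :
    IsOddMinorOf K G :=
  ⟨isEmptyElim, fun _ => 0, isEmptyElim, fun w => isEmptyElim w, fun w => isEmptyElim w,
    fun w => isEmptyElim w⟩

lemma IsOddMinorOf.mono {G' : SimpleGraph V} (hle : G ≤ G') (h : IsOddMinorOf K G) :
    IsOddMinorOf K G' := by
  obtain ⟨T, c, hT, hdisj, hc, hK⟩ := h
  refine ⟨fun w => (T w).ofLE hle, c, hT, hdisj, hc, fun w w' hww => ?_⟩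
  obtain ⟨x, y, hx, hy, hxy, hcol⟩ := hK w w' hww
  exact ⟨x, y, hx, hy, hle hxy, hcol⟩

lemma IsOddMinorOf.comap {K' : SimpleGraph Y} (f : K' ↪g K) (h : IsOddMinorOf K G) :
    IsOddMinorOf K' G := by
  obtain ⟨T, c, hT, hdisj, hc, hK⟩ := h
  exact ⟨fun w => T (f w), c, fun w => hT (f w), fun w w' hww => hdisj (f.injective.ne hww),
    fun w => hc (f w), fun w w' hww => hK (f w) (f w') (f.map_adj_iff.2 hww)⟩

lemma IsOddMinorOf.card_le [Fintype X] [Fintype V] (h : IsOddMinorOf K G) :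
    Fintype.card X ≤ Fintype.card V := by
  obtain ⟨T, -, hT, hdisj, -, -⟩ := h
  choose f hf using fun w => Set.nonempty_coe_sort.1 (hT w).connected.nonempty
  refine Fintype.card_le_of_injective f fun w w' hww => ?_
  by_contra hne
  exact Set.disjoint_left.1 (hdisj hne) (hf w) (hww ▸ hf w')

theorem IsOddMinorOf.strongProd (hG : IsOddMinorOf K G) (hH : IsOddMinorOf L H) :
    IsOddMinorOf (strongProd K L) (strongProd G H) := by
  obtain ⟨T, c, hT, hTdisj, hc, hTK⟩ := hG
  obtain ⟨S, d, hS, hSdisj, hd, hSL⟩ := hH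
  have hTne (i : X) : (T i).verts.Nonempty := Set.nonempty_coe_sort.1 (hT i).connected.nonempty
  choose r hr using fun j => Set.nonempty_coe_sort.1 (hS j).connected.nonempty
  refine ⟨fun p => combSubgraph (T p.1) (S p.2) (r p.2) (hr p.2), fun v => c v.1 + d v.2,
    fun p => isTree_coe_combSubgraph (hr p.2) (hT p.1) (hS p.2),
    fun p p' hpp => Set.disjoint_prod.2
      ((not_and_or.1 (Prod.ext_iff.not.1 hpp)).imp (hTdisj ·) (hSdisj ·)), ?_, ?_⟩
  · rintro ⟨i, j⟩ ⟨x, y⟩ ⟨x', y'⟩ (⟨rfl, -, hyy⟩ | ⟨rfl, rfl, hxx⟩) hcol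
    · exact hd j y y' hyy (add_left_cancel hcol)
    · exact hc i x x' hxx (add_right_cancel hcol)
  · rintro ⟨i, j⟩ ⟨i', j'⟩ (⟨rfl, hjj⟩ | ⟨rfl, hii⟩ | ⟨hii, hjj⟩)
    · obtain ⟨y, y', hy, hy', hyy, hcol⟩ := hSL j j' hjj
      obtain ⟨x, hx⟩ := hTne i
      exact ⟨(x, y), (x, y'), ⟨hx, hy⟩, ⟨hx, hy'⟩, Or.inl ⟨rfl, hyy⟩, congrArg (c x + ·) hcol⟩
    · obtain ⟨x, x', hx, hx', hxx, hcol⟩ := hTK i i' hii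
      exact ⟨(x, r j), (x', r j), ⟨hx, hr j⟩, ⟨hx', hr j⟩, Or.inr (Or.inl ⟨rfl, hxx⟩),
        congrArg (· + d (r j)) hcol⟩
    · obtain ⟨x, x', hx, hx', hxx, hcolx⟩ := hTK i i' hii
      obtain ⟨y, y', hy, hy', hyy, hcoly⟩ := hSL j j' hjj
      exact ⟨(x, y), (x', y'), ⟨hx, hy⟩, ⟨hx', hy'⟩, Or.inr (Or.inr ⟨hxx, hyy⟩),
        congrArg₂ (· + ·) hcolx hcoly⟩

end OddMinor

section OddHadwiger

variable {V W : Type*} [Fintype V] {G : SimpleGraph V}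

lemma bddAbove_setOf_isOddMinorOf (G : SimpleGraph V) :
    BddAbove {r : ℕ | IsOddMinorOf (⊤ : SimpleGraph (Fin r)) G} :=
  ⟨Fintype.card V, fun r (hr : IsOddMinorOf _ G) => by simpa using hr.card_le⟩

lemma isOddMinorOf_oddHadwiger (G : SimpleGraph V) :
    IsOddMinorOf (⊤ : SimpleGraph (Fin (oddHadwiger G))) G :=
  Nat.sSup_mem ⟨0, isOddMinorOf_of_isEmpty _ G⟩ (bddAbove_setOf_isOddMinorOf G)

lemma le_oddHadwiger {r : ℕ} (h : IsOddMinorOf (⊤ : SimpleGraph (Fin r)) G) :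
    r ≤ oddHadwiger G :=
  le_csSup (bddAbove_setOf_isOddMinorOf G) h

lemma IsOddMinorOf.card_le_oddHadwiger [Fintype W] (h : IsOddMinorOf (⊤ : SimpleGraph W) G) :
    Fintype.card W ≤ oddHadwiger G :=
  le_oddHadwiger (h.comap (Iso.completeGraph (Fintype.equivFin W).symm).toEmbedding)

lemma oddHadwiger_le_card (G : SimpleGraph V) : oddHadwiger G ≤ Fintype.card V := by
  simpa using (isOddMinorOf_oddHadwiger G).card_le

lemma oddHadwiger_mono {G' : SimpleGraph V} (hle : G ≤ G') : oddHadwiger G ≤ oddHadwiger G' :=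
  le_oddHadwiger ((isOddMinorOf_oddHadwiger G).mono hle)

end OddHadwiger

lemma strongProd_top {X Y : Type*} :
    strongProd (⊤ : SimpleGraph X) (⊤ : SimpleGraph Y) = ⊤ := by
  ext ⟨i, j⟩ ⟨i', j'⟩
  simp only [strongProd, top_adj, ne_eq, Prod.mk.injEq]
  tauto

lemma strongProd_le_lexProd {V W : Type*} {G : SimpleGraph V} {H : SimpleGraph W} :
    strongProd G H ≤ lexProd G H := by
  rintro p q (⟨h1, h2⟩ | ⟨-, h⟩ | ⟨h, -⟩)
  exacts [Or.inr ⟨h1, h2⟩, Or.inl h, Or.inl h]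

theorem stmt_16_general {V W : Type*} [Fintype V] [Fintype W]
    (G : SimpleGraph V) (H : SimpleGraph W) (s t : ℕ)
    (hs : oddHadwiger G = s)
    (ht : oddHadwiger H = t) :
    oddHadwiger (strongProd G H) ≥
      oddHadwiger (strongProd (⊤ : SimpleGraph (Fin s)) (⊤ : SimpleGraph (Fin t))) ∧
    oddHadwiger (lexProd G H) ≥
      oddHadwiger (lexProd (⊤ : SimpleGraph (Fin s)) (⊤ : SimpleGraph (Fin t))) := by
  have hKst : IsOddMinorOf (⊤ : SimpleGraph (Fin s × Fin t)) (strongProd G H) := by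
    rw [← strongProd_top]
    exact (hs ▸ isOddMinorOf_oddHadwiger G).strongProd (ht ▸ isOddMinorOf_oddHadwiger H)
  have hst := hKst.card_le_oddHadwiger
  exact ⟨(oddHadwiger_le_card _).trans hst,
    (oddHadwiger_le_card _).trans (hst.trans (oddHadwiger_mono strongProd_le_lexProd))⟩

theorem stmt_16 {V W : Type*} [Fintype V] [Fintype W]
    (G : SimpleGraph V) (H : SimpleGraph W) (s t : ℕ)
    (hs : oddHadwiger G = s) (hs2 : 2 ≤ s)
    (ht : oddHadwiger H = t) (ht2 : 2 ≤ t) :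
    oddHadwiger (strongProd G H) ≥
      oddHadwiger (strongProd (⊤ : SimpleGraph (Fin s)) (⊤ : SimpleGraph (Fin t))) ∧
    oddHadwiger (lexProd G H) ≥
      oddHadwiger (lexProd (⊤ : SimpleGraph (Fin s)) (⊤ : SimpleGraph (Fin t))) :=
  stmt_16_general G H s t hs ht
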